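/- Let x_B be any individual binary image on a finite set of sites B, l : {0,1}×[0,1] → [0, l_max] a bounded loss function, Ψ_B any (possibly data-dependent) scan for B producing the sequence x₁^{|B|}, and k < |B|. Let F^{k,opt} be the optimal k-th order Markov predictor with respect to the empirical conditional distribution P̂^{k+1}_{Ψ_B}(·|·) (i.e., for each context s' ∈ {0,1}^k its prediction minimizes Σ_{x∈{0,1}} P̂^{k+1}_{Ψ_B}(x|s')·l(x,q) over q ∈ [0,1]). Then for every α, β ∈ ℝ: | α·Ĥ^{k+1}_{Ψ_B}(X|X^k) + β − (1/|B|)·L_{(Ψ_B, F^{k,opt})}(x_B) | ≤ ε_l(α,β) + k·l_max/|B|; in particular, with (α_l,β_l) achieving the infimum defining ε_l, the left-hand side is at most ε_l + k·l_max/|B|. -/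

import Mathlib

open MeasureTheory Filter Real

namespace Scandiction

variable {A D B : Type*}

def visits (Ψ : ∀ t : ℕ, (Fin t → A) → B) (x : B → A) : ℕ → B
  | t => Ψ t fun i : Fin t => x (visits Ψ x i)
  decreasing_by exact i.isLt

def IsValidScan [Fintype B] (Ψ : ∀ t : ℕ, (Fin t → A) → B) : Prop :=
  ∀ x : B → A, Function.Bijective fun t : Fin (Fintype.card B) => visits Ψ x t.1

noncomputable def cumLoss [Fintype B] (l : A → D → ℝ)
    (Ψ : ∀ t : ℕ, (Fin t → A) → B) (F : ∀ t : ℕ, (Fin t → A) → D) (x : B → A) : ℝ :=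
  ∑ t : Fin (Fintype.card B),
    l (x (visits Ψ x t.1)) (F t.1 fun i : Fin t.1 => x (visits Ψ x i.1))

/-- Binary entropy (in nats): `h_b(p) = -p log p - (1-p) log (1-p)`. -/
noncomputable def hb (p : ℝ) : ℝ := Real.negMulLog p + Real.negMulLog (1 - p)

/-- Bayes envelope `φ_l(p) = inf_{q ∈ [0,1]} [(1-p)·l(0,q) + p·l(1,q)]`. -/
noncomputable def bayesEnv (l : Bool → unitInterval → ℝ) (p : ℝ) : ℝ :=
  ⨅ q : unitInterval, ((1 - p) * l false q + p * l true q)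

/-- `ε_l(α,β) = sup_{p ∈ [0,1]} |α·h_b(p) + β − φ_l(p)|`. -/
noncomputable def epsF (l : Bool → unitInterval → ℝ) (α β : ℝ) : ℝ :=
  ⨆ p : unitInterval, |α * hb (p : ℝ) + β - bayesEnv l (p : ℝ)|

/-- `ε_l = inf_{α,β} ε_l(α,β)`. -/
noncomputable def epsL (l : Bool → unitInterval → ℝ) : ℝ :=
  ⨅ ab : ℝ × ℝ, epsF l ab.1 ab.2

/-- Number of windows `y_{t-k}, …, y_t`, `k ≤ t < N`, equal to `s ∈ {0,1}^{k+1}`. -/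
def empCount (y : ℕ → Bool) (N k : ℕ) (s : Fin (k + 1) → Bool) : ℕ :=
  ((Finset.Ico k N).filter fun t => ∀ i : Fin (k + 1), y (t - k + i.1) = s i).card

/-- Number of windows whose first `k` symbols equal `s' ∈ {0,1}^k`
(the marginal count, obtained by summing over the trailing symbol). -/
def margCount (y : ℕ → Bool) (N k : ℕ) (s' : Fin k → Bool) : ℕ :=
  ((Finset.Ico k N).filter fun t => ∀ i : Fin k, y (t - k + i.1) = s' i).card

/-- Empirical conditional probability `P̂^{k+1}(b | s')`, with `0/0 := 1/2`. -/
noncomputable def condP (y : ℕ → Bool) (N k : ℕ) (s' : Fin k → Bool) (b : Bool) : ℝ :=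
  if margCount y N k s' = 0 then 1 / 2
  else (empCount y N k (Fin.snoc s' b) : ℝ) / (margCount y N k s' : ℝ)

/-- Empirical conditional entropy of order `k` (in nats):
`Ĥ^{k+1}(X|X^k) = -Σ_{s'} P̂^{k+1}(s') Σ_b P̂^{k+1}(b|s') log P̂^{k+1}(b|s')`. -/
noncomputable def empCondEnt (y : ℕ → Bool) (N k : ℕ) : ℝ :=
  ∑ s' : Fin k → Bool,
    ((margCount y N k s' : ℝ) / ((N : ℝ) - k)) *
      ∑ b : Bool, Real.negMulLog (condP y N k s' b)

/-- The sequence of values read along the realized scan `Ψ` of the image `x`. -/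
def scanSeq {B : Type*} (Ψ : ∀ t : ℕ, (Fin t → Bool) → B) (x : B → Bool) : ℕ → Bool :=
  fun t => x (visits Ψ x t)

section Helpers
variable (y : ℕ → Bool) (N k : ℕ)

lemma empCount_le_margCount (s' : Fin k → Bool) (b : Bool) :
    empCount y N k (Fin.snoc s' b) ≤ margCount y N k s' := by
  apply Finset.card_le_card
  intro t ht
  rw [Finset.mem_filter] at ht ⊢
  refine ⟨ht.1, fun i => ?_⟩
  have h := ht.2 i.castSucc
  rwa [Fin.snoc_castSucc] at h

lemma sum_empCount (s' : Fin k → Bool) :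
    ∑ b, empCount y N k (Fin.snoc s' b) = margCount y N k s' := by
  classical
  rw [margCount, Finset.card_eq_sum_card_fiberwise
    (f := fun t => y t) (t := Finset.univ) (fun _ _ => Finset.mem_univ _)]
  apply Finset.sum_congr rfl
  intro b _
  rw [empCount]
  congr 1
  rw [Finset.filter_filter]
  apply Finset.filter_congr
  intro t ht
  rw [Finset.mem_Ico] at ht
  have htk : t - k + k = t := by omega
  constructor
  · intro h
    refine ⟨fun i => by simpa [Fin.snoc_castSucc] using h i.castSucc, ?_⟩
    have h2 := h (Fin.last k)
    rwa [Fin.snoc_last, Fin.val_last, htk] at h2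
  · rintro ⟨h1, h2⟩ i
    refine Fin.lastCases ?_ (fun j => ?_) i
    · rw [Fin.snoc_last, Fin.val_last, htk]; exact h2
    · rw [Fin.snoc_castSucc]; exact h1 j

lemma sum_margCount :
    ∑ s' : Fin k → Bool, margCount y N k s' = N - k := by
  classical
  have h : ∀ s' : Fin k → Bool, margCount y N k s'
      = ((Finset.Ico k N).filter fun t => (fun i : Fin k => y (t - k + i.1)) = s').card := by
    intro s'; rw [margCount]; congr 1
    apply Finset.filter_congr
    intro t _
    simp [funext_iff]
  simp_rw [h]
  rw [← Finset.card_eq_sum_card_fiberwise (fun _ _ => Finset.mem_univ _), Nat.card_Ico]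

lemma condP_nonneg (s' : Fin k → Bool) (b : Bool) : 0 ≤ condP y N k s' b := by
  rw [condP]; split
  · norm_num
  · positivity

lemma condP_false (s' : Fin k → Bool) :
    condP y N k s' false = 1 - condP y N k s' true := by
  rw [condP, condP]
  split
  · norm_num
  · rename_i h
    have hm : (margCount y N k s' : ℝ) ≠ 0 := Nat.cast_ne_zero.2 h
    have hsum : (empCount y N k (Fin.snoc s' false) : ℝ)
        + (empCount y N k (Fin.snoc s' true) : ℝ) = (margCount y N k s' : ℝ) := by
      have := sum_empCount y N k s'
      rw [Fintype.sum_bool] at this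
      push_cast [← this]
      ring
    field_simp
    linarith

lemma condP_le_one (s' : Fin k → Bool) (b : Bool) : condP y N k s' b ≤ 1 := by
  rw [condP]; split
  · norm_num
  · rename_i h
    have hm : (0:ℝ) < (margCount y N k s' : ℝ) :=
      Nat.cast_pos.2 (Nat.pos_of_ne_zero h)
    rw [div_le_one hm]
    exact_mod_cast empCount_le_margCount y N k s' b

lemma empCount_eq_mul (s' : Fin k → Bool) (b : Bool) :
    (empCount y N k (Fin.snoc s' b) : ℝ) = (margCount y N k s' : ℝ) * condP y N k s' b := by
  rw [condP]; split
  · rename_i h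
    have h0 : empCount y N k (Fin.snoc s' b) = 0 :=
      Nat.le_zero.mp (h ▸ empCount_le_margCount y N k s' b)
    simp [h0, h]
  · rename_i h
    have hm : (margCount y N k s' : ℝ) ≠ 0 := Nat.cast_ne_zero.2 h
    field_simp

/-- Fiberwise decomposition of a sum over windows. -/
lemma sum_Ico_eq_sum_counts (G : (Fin k → Bool) → Bool → ℝ) :
    ∑ t ∈ Finset.Ico k N, G (fun i : Fin k => y (t - k + i.1)) (y t)
      = ∑ s' : Fin k → Bool, ∑ b : Bool,
          (empCount y N k (Fin.snoc s' b) : ℝ) * G s' b := by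
  classical
  set w : ℕ → (Fin (k+1) → Bool) := fun t => fun i : Fin (k+1) => y (t - k + i.1) with hw
  set f : (Fin (k+1) → Bool) → ℝ := fun s => G (Fin.init s) (s (Fin.last k)) with hf
  have hL : ∑ t ∈ Finset.Ico k N, G (fun i : Fin k => y (t - k + i.1)) (y t)
      = ∑ t ∈ Finset.Ico k N, f (w t) := by
    apply Finset.sum_congr rfl
    intro t ht
    rw [Finset.mem_Ico] at ht
    have htk : t - k + k = t := by omega
    have h1 : Fin.init (w t) = fun i : Fin k => y (t - k + i.1) := by
      funext i; simp [Fin.init, hw]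
    have h2 : w t (Fin.last k) = y t := by simp [hw, htk]
    simp only [hf]
    rw [h1, h2]
  rw [hL, ← Finset.sum_fiberwise' (Finset.Ico k N) w f]
  have hcard : ∀ s : Fin (k+1) → Bool,
      ((Finset.Ico k N).filter fun t => w t = s).card = empCount y N k s := by
    intro s
    rw [empCount]; congr 1
    apply Finset.filter_congr
    intro t _
    simp [hw, funext_iff]
  have hstep : ∀ s : Fin (k+1) → Bool,
      (∑ t ∈ (Finset.Ico k N).filter (fun t => w t = s), f s)
        = (empCount y N k s : ℝ) * f s := by
    intro s
    rw [Finset.sum_const, hcard, nsmul_eq_mul]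
  rw [Finset.sum_congr rfl (fun s _ => hstep s)]
  have hbij : Function.Bijective (fun p : (Fin k → Bool) × Bool => (Fin.snoc p.1 p.2 : Fin (k+1) → Bool)) := by
    refine Function.bijective_iff_has_inverse.2
      ⟨fun s => (Fin.init s, s (Fin.last k)), fun p => ?_, fun s => ?_⟩
    · simp
    · simp
  rw [← Function.Bijective.sum_comp hbij (fun s => (empCount y N k s : ℝ) * f s)]
  rw [Fintype.sum_prod_type]
  apply Finset.sum_congr rfl
  intro s' _
  apply Finset.sum_congr rfl
  intro b _
  simp [hf]

end Helpers

section Env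
variable (l : Bool → unitInterval → ℝ)

lemma bayesEnv_bddBelow (hl0 : ∀ b q, 0 ≤ l b q) {p : ℝ} (hp0 : 0 ≤ p) (hp1 : p ≤ 1) :
    BddBelow (Set.range fun q : unitInterval => (1 - p) * l false q + p * l true q) := by
  refine ⟨0, ?_⟩
  rintro v ⟨q, rfl⟩
  have h1 := hl0 false q
  have h2 := hl0 true q
  dsimp only
  nlinarith

lemma bayesEnv_nonneg (hl0 : ∀ b q, 0 ≤ l b q) {p : ℝ} (hp0 : 0 ≤ p) (hp1 : p ≤ 1) :
    0 ≤ bayesEnv l p :=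
  le_ciInf fun q => by nlinarith [hl0 false q, hl0 true q]

lemma bayesEnv_le_lmax (lmax : ℝ) (hl : ∀ b q, 0 ≤ l b q ∧ l b q ≤ lmax)
    {p : ℝ} (hp0 : 0 ≤ p) (hp1 : p ≤ 1) : bayesEnv l p ≤ lmax := by
  have h := ciInf_le (bayesEnv_bddBelow l (fun b q => (hl b q).1) hp0 hp1)
    (⟨0, by norm_num, by norm_num⟩ : unitInterval)
  refine h.trans ?_
  have h1 := (hl false ⟨0, by norm_num, by norm_num⟩).2
  have h2 := (hl true ⟨0, by norm_num, by norm_num⟩).2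
  have h3 := (hl false ⟨0, by norm_num, by norm_num⟩).1
  have h4 := (hl true ⟨0, by norm_num, by norm_num⟩).1
  nlinarith

lemma bayesEnv_eq_of_min (hl0 : ∀ b q, 0 ≤ l b q) {p : ℝ} (hp0 : 0 ≤ p) (hp1 : p ≤ 1)
    (q0 : unitInterval)
    (hmin : ∀ q : unitInterval,
      (1 - p) * l false q0 + p * l true q0 ≤ (1 - p) * l false q + p * l true q) :
    bayesEnv l p = (1 - p) * l false q0 + p * l true q0 :=
  le_antisymm (ciInf_le (bayesEnv_bddBelow l hl0 hp0 hp1) q0) (le_ciInf hmin)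

lemma abs_le_epsF (lmax : ℝ) (hl : ∀ b q, 0 ≤ l b q ∧ l b q ≤ lmax) (α β : ℝ)
    (p : unitInterval) :
    |α * hb (p : ℝ) + β - bayesEnv l (p : ℝ)| ≤ epsF l α β := by
  refine le_ciSup (f := fun p : unitInterval => |α * hb (p : ℝ) + β - bayesEnv l (p : ℝ)|)
    ⟨|α| * Real.log 2 + |β| + lmax, ?_⟩ p
  rintro v ⟨r, rfl⟩
  have hr0 : (0:ℝ) ≤ (r:ℝ) := r.2.1
  have hr1 : (r:ℝ) ≤ 1 := r.2.2
  have hhb : hb (r:ℝ) = Real.binEntropy (r:ℝ) :=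
    (Real.binEntropy_eq_negMulLog_add_negMulLog_one_sub (r:ℝ)).symm
  have h1 : 0 ≤ hb (r:ℝ) := hhb ▸ Real.binEntropy_nonneg hr0 hr1
  have h2 : hb (r:ℝ) ≤ Real.log 2 := hhb ▸ Real.binEntropy_le_log_two
  have h3 : 0 ≤ bayesEnv l (r:ℝ) := bayesEnv_nonneg l (fun b q => (hl b q).1) hr0 hr1
  have h4 : bayesEnv l (r:ℝ) ≤ lmax := bayesEnv_le_lmax l lmax hl hr0 hr1
  have h5 : |α * hb (r:ℝ) + β - bayesEnv l (r:ℝ)|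
      ≤ |α * hb (r:ℝ)| + |β| + |bayesEnv l (r:ℝ)| := by
    calc |α * hb (r:ℝ) + β - bayesEnv l (r:ℝ)|
        ≤ |α * hb (r:ℝ) + β| + |bayesEnv l (r:ℝ)| := abs_sub _ _
      _ ≤ |α * hb (r:ℝ)| + |β| + |bayesEnv l (r:ℝ)| := by
          linarith [abs_add_le (α * hb (r:ℝ)) β]
  have h6 : |α * hb (r:ℝ)| ≤ |α| * Real.log 2 := by
    rw [abs_mul, abs_of_nonneg h1]
    exact mul_le_mul_of_nonneg_left h2 (abs_nonneg α)
  rw [abs_of_nonneg h3] at h5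
  linarith

end Env

/-- For any individual binary image `x_B`, any scan `Ψ_B`, and the
optimal `k`-th order Markov predictor `F^{k,opt}` with respect to the empirical conditional
distribution of the scanned sequence (given by a context function `g` minimizing the
empirical conditional risk, arbitrary on the first `k` steps):
`|α·Ĥ^{k+1}(X|X^k) + β − L/|B|| ≤ ε_l(α,β) + k·l_max/|B|`. -/

theorem statement16 {B : Type*} [Fintype B]
    (lmax : ℝ) (l : Bool → unitInterval → ℝ) (hl : ∀ b q, 0 ≤ l b q ∧ l b q ≤ lmax)
    (x : B → Bool) (Ψ : ∀ t : ℕ, (Fin t → Bool) → B) (hΨ : IsValidScan Ψ)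
    (k : ℕ) (hk : k < Fintype.card B)
    (g : (Fin k → Bool) → unitInterval)
    (hg : ∀ (s' : Fin k → Bool) (q : unitInterval),
      condP (scanSeq Ψ x) (Fintype.card B) k s' false * l false (g s')
          + condP (scanSeq Ψ x) (Fintype.card B) k s' true * l true (g s')
        ≤ condP (scanSeq Ψ x) (Fintype.card B) k s' false * l false q
          + condP (scanSeq Ψ x) (Fintype.card B) k s' true * l true q)
    (F : ∀ t : ℕ, (Fin t → Bool) → unitInterval)
    (hF : ∀ (t : ℕ) (ht : k ≤ t) (p : Fin t → Bool),
      F t p = g fun i : Fin k => p ⟨t - k + i.1, by have := i.isLt; omega⟩)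
    (α β : ℝ) :
    |α * empCondEnt (scanSeq Ψ x) (Fintype.card B) k + β
        - cumLoss l Ψ F x / Fintype.card B|
      ≤ epsF l α β + (k : ℝ) * lmax / Fintype.card B := by
  classical
  set y : ℕ → Bool := scanSeq Ψ x with hy
  set N : ℕ := Fintype.card B with hN
  have hkN : k ≤ N := hk.le
  have hN0 : 0 < N := lt_of_le_of_lt (Nat.zero_le k) hk
  set c : ℝ := ((N - k : ℕ) : ℝ) with hcdef
  have hc0 : (0:ℝ) < c := by
    rw [hcdef]; exact_mod_cast Nat.sub_pos_of_lt hk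
  have hNr : (0:ℝ) < (N:ℝ) := Nat.cast_pos.2 hN0
  have hck : (N:ℝ) - (k:ℝ) = c := by
    rw [hcdef, Nat.cast_sub hkN]
  have hcleN : c ≤ (N:ℝ) := by
    have : (0:ℝ) ≤ (k:ℝ) := Nat.cast_nonneg k
    linarith [hck]
  have hmsum : (∑ s' : Fin k → Bool, (margCount y N k s' : ℝ)) = c := by
    rw [hcdef]
    exact_mod_cast congrArg (fun n : ℕ => (n : ℝ)) (sum_margCount y N k)
  have hlmax : 0 ≤ lmax :=
    le_trans (hl true ⟨0, by norm_num, by norm_num⟩).1 (hl true ⟨0, by norm_num, by norm_num⟩).2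
  -- per-context risk equals the Bayes envelope
  have hrisk : ∀ s' : Fin k → Bool, bayesEnv l (condP y N k s' true)
      = condP y N k s' false * l false (g s') + condP y N k s' true * l true (g s') := by
    intro s'
    have hmin : ∀ q : unitInterval,
        (1 - condP y N k s' true) * l false (g s') + condP y N k s' true * l true (g s')
          ≤ (1 - condP y N k s' true) * l false q + condP y N k s' true * l true q := by
      intro q
      have h := hg s' q
      rw [condP_false y N k s'] at h
      exact h
    rw [bayesEnv_eq_of_min l (fun b q => (hl b q).1) (condP_nonneg y N k s' true)
      (condP_le_one y N k s' true) (g s') hmin, condP_false y N k s']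
  -- entropy rewrite
  have hEnt : empCondEnt y N k = ∑ s' : Fin k → Bool,
      ((margCount y N k s' : ℝ) / c) * hb (condP y N k s' true) := by
    rw [empCondEnt]
    apply Finset.sum_congr rfl
    intro s' _
    rw [hck]
    congr 1
    rw [Fintype.sum_bool, condP_false y N k s']
    simp only [hb]
  -- cumulative loss split
  have hcum : cumLoss l Ψ F x
      = (∑ t ∈ Finset.range k, l (y t) (F t fun i : Fin t => y i.1))
        + ∑ t ∈ Finset.Ico k N, l (y t) (g fun i : Fin k => y (t - k + i.1)) := by
    have h0 : cumLoss l Ψ F x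
        = ∑ t ∈ Finset.range N, l (y t) (F t fun i : Fin t => y i.1) :=
      Fin.sum_univ_eq_sum_range (fun t => l (y t) (F t fun i : Fin t => y i.1)) N
    rw [h0, Finset.range_eq_Ico,
      ← Finset.sum_Ico_consecutive _ (Nat.zero_le k) hkN, ← Finset.range_eq_Ico]
    congr 1
    apply Finset.sum_congr rfl
    intro t ht
    rw [Finset.mem_Ico] at ht
    rw [hF t ht.1]
  -- the tail loss in terms of counts
  have hL'eq : (∑ t ∈ Finset.Ico k N, l (y t) (g fun i : Fin k => y (t - k + i.1)))
      = ∑ s' : Fin k → Bool, (margCount y N k s' : ℝ) * bayesEnv l (condP y N k s' true) := by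
    have h := sum_Ico_eq_sum_counts y N k (fun s' b => (l b (g s') : ℝ))
    beta_reduce at h
    rw [h]
    apply Finset.sum_congr rfl
    intro s' _
    rw [Fintype.sum_bool, empCount_eq_mul y N k s' true, empCount_eq_mul y N k s' false,
      hrisk s']
    ring
  set L0 : ℝ := ∑ t ∈ Finset.range k, l (y t) (F t fun i : Fin t => y i.1) with hL0def
  set L' : ℝ := ∑ t ∈ Finset.Ico k N, l (y t) (g fun i : Fin k => y (t - k + i.1)) with hL'def
  -- central estimate
  have hT : α * empCondEnt y N k + β - L' / c
      = ∑ s' : Fin k → Bool, ((margCount y N k s' : ℝ) / c)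
          * (α * hb (condP y N k s' true) + β - bayesEnv l (condP y N k s' true)) := by
    rw [hEnt, hL'eq]
    have h1 : ∑ s' : Fin k → Bool, ((margCount y N k s' : ℝ) / c)
          * (α * hb (condP y N k s' true) + β - bayesEnv l (condP y N k s' true))
        = (∑ s' : Fin k → Bool,
            α * (((margCount y N k s' : ℝ) / c) * hb (condP y N k s' true)))
          + ((∑ s' : Fin k → Bool, (margCount y N k s' : ℝ) * β) / c
          - (∑ s' : Fin k → Bool,
              (margCount y N k s' : ℝ) * bayesEnv l (condP y N k s' true)) / c) := by
      rw [Finset.sum_div, Finset.sum_div, ← Finset.sum_sub_distrib,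
        ← Finset.sum_add_distrib]
      apply Finset.sum_congr rfl
      intro s' _
      ring
    rw [h1, ← Finset.sum_mul, hmsum, ← Finset.mul_sum]
    rw [mul_comm c β, mul_div_assoc, div_self hc0.ne', mul_one]
    ring
  have hTabs : |α * empCondEnt y N k + β - L' / c| ≤ epsF l α β := by
    rw [hT]
    have step1 : |∑ s' : Fin k → Bool, ((margCount y N k s' : ℝ) / c)
          * (α * hb (condP y N k s' true) + β - bayesEnv l (condP y N k s' true))|
        ≤ ∑ s' : Fin k → Bool, ((margCount y N k s' : ℝ) / c) * epsF l α β := by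
      refine (Finset.abs_sum_le_sum_abs _ _).trans (Finset.sum_le_sum ?_)
      intro s' _
      rw [abs_mul, abs_of_nonneg (div_nonneg (Nat.cast_nonneg _) hc0.le)]
      refine mul_le_mul_of_nonneg_left ?_ (div_nonneg (Nat.cast_nonneg _) hc0.le)
      exact abs_le_epsF l lmax hl α β
        ⟨condP y N k s' true, condP_nonneg y N k s' true, condP_le_one y N k s' true⟩
    refine step1.trans ?_
    rw [← Finset.sum_mul, ← Finset.sum_div, hmsum, div_self hc0.ne', one_mul]
  -- bounds on the loss pieces
  have hL0nn : 0 ≤ L0 := Finset.sum_nonneg fun t _ => (hl _ _).1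
  have hL0le : L0 ≤ (k:ℝ) * lmax := by
    refine (Finset.sum_le_sum fun t (_ : t ∈ Finset.range k) => (hl (y t) _).2).trans ?_
    rw [Finset.sum_const, Finset.card_range, nsmul_eq_mul]
  have hL'nn : 0 ≤ L' := Finset.sum_nonneg fun t _ => (hl _ _).1
  have hL'le : L' ≤ c * lmax := by
    refine (Finset.sum_le_sum fun t (_ : t ∈ Finset.Ico k N) => (hl (y t) _).2).trans ?_
    rw [Finset.sum_const, Nat.card_Ico, nsmul_eq_mul]
  -- the boundary-effect error term
  have hE : |L' / c - L' / (N:ℝ) - L0 / (N:ℝ)| ≤ (k:ℝ) * lmax / (N:ℝ) := by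
    rw [abs_le]
    constructor
    · have h1 : L0 / (N:ℝ) ≤ (k:ℝ) * lmax / (N:ℝ) := by gcongr
      have h2 : L' / (N:ℝ) ≤ L' / c := by gcongr
      linarith
    · have h3 : L' / c - L' / (N:ℝ) = L' * ((N:ℝ) - c) / (c * (N:ℝ)) := by
        field_simp
      have h4 : (N:ℝ) - c = (k:ℝ) := by linarith [hck]
      have h5 : L' * (k:ℝ) / (c * (N:ℝ)) ≤ (c * lmax) * (k:ℝ) / (c * (N:ℝ)) := by
        gcongr
      have h6 : (c * lmax) * (k:ℝ) / (c * (N:ℝ)) = (k:ℝ) * lmax / (N:ℝ) := by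
        field_simp
      have h7 : 0 ≤ L0 / (N:ℝ) := div_nonneg hL0nn hNr.le
      rw [h3, h4]
      linarith
  -- assemble
  have hgoal : α * empCondEnt y N k + β - cumLoss l Ψ F x / (N:ℝ)
      = (α * empCondEnt y N k + β - L' / c)
        + (L' / c - L' / (N:ℝ) - L0 / (N:ℝ)) := by
    rw [hcum]
    ring
  calc |α * empCondEnt y N k + β - cumLoss l Ψ F x / (N:ℝ)|
      ≤ |α * empCondEnt y N k + β - L' / c|
        + |L' / c - L' / (N:ℝ) - L0 / (N:ℝ)| := by
        rw [hgoal]; exact abs_add_le _ _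
    _ ≤ epsF l α β + (k:ℝ) * lmax / (N:ℝ) := add_le_add hTabs hE

end Scandiction
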